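/- For every vertex v ∈ V, the random variable Q^v := lim_{m→∞} Σ_{w ∈ V, |w| < m} L^v_w·C(U^{vw}) exists almost surely, and the family (Q^v)_{v∈V} satisfies, almost surely for every v ∈ V, the pathwise recursive Quicksort fixed point equation Q^v = U^v·Q^{v1} + (1−U^v)·Q^{v2} + C(U^v). -/

import Mathlib

/-!
Write `D^v_k = ∑_{|w| = k} L^v_w C(U^{vw})` for the `k`-th level of the series. Since
`∫₀¹ C = 0` and `U^{vw}` is independent of every other variable entering `L^v_w` and
`L^v_{w'}`, distinct summands of `D^v_k` are orthogonal in `L²`; together with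
`E (L^v_w)² = 3^{-|w|}` and `|C| ≤ 1` this gives `E (D^v_k)² ≤ (2/3)^k`. Hence
`∑_k E |D^v_k| ≤ ∑_k (2/3)^{k/2} < ∞`, so the series converges absolutely almost surely,
simultaneously for the countably many `v`, and the fixed point equation is the limit of the
one-step recursion `D^v_{k+1} = U^v D^{v1}_k + (1 - U^v) D^{v2}_k`.
-/

open MeasureTheory ProbabilityTheory Filter Finset
open scoped ENNReal

noncomputable section

/-- The Quicksort cost function `C(x) = 1 + 2x·ln x + 2(1-x)·ln(1-x)`
(with `Real.log 0 = 0`, encoding the convention `0·ln 0 = 0`). -/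
def Cq (x : ℝ) : ℝ := 1 + 2 * x * Real.log x + 2 * (1 - x) * Real.log (1 - x)

/-- Multiplicative path weights on the binary tree `V = {1,2}*` (words over `Bool`,
where `false` is the letter `1` and `true` is the letter `2`): `Lw U v w` is the
weight `L^v_w` of the path from `v` to `vw`, with `L^v_∅ = 1`,
`L^v_{w1} = L^v_w·U^{vw}` and `L^v_{w2} = L^v_w·(1 − U^{vw})`. -/
def Lw {Ω : Type*} (U : List Bool → Ω → ℝ) : List Bool → List Bool → Ω → ℝ
  | _, [], _ => 1
  | v, b :: w, ω => (if b then 1 - U v ω else U v ω) * Lw U (v ++ [b]) w ω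

/-- The partial sums `R^v_m = Σ_{w ∈ V, |w| < m} L^v_w·C(U^{vw})` of the weighted
branching process defining the Quicksort distribution. -/
def QSsum {Ω : Type*} (U : List Bool → Ω → ℝ) (v : List Bool) (m : ℕ) (ω : Ω) : ℝ :=
  ∑ k ∈ Finset.range m, ∑ w : Fin k → Bool,
    Lw U v (List.ofFn w) ω * Cq (U (v ++ List.ofFn w) ω)

open Real in
lemma integral_mul_log_zero_one : ∫ x in (0 : ℝ)..1, x * log x = -1 / 4 := by
  have hderiv : ∀ x ∈ Set.Ioo (0 : ℝ) 1,
      HasDerivAt (fun y => y / 2 * (y * log y) - y ^ 2 / 4) (x * log x) x := by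
    rintro x ⟨hx, -⟩
    refine ((((hasDerivAt_id x).div_const 2).mul (hasDerivAt_mul_log hx.ne')).sub
      ((hasDerivAt_pow 2 x).div_const 4)).congr_deriv ?_
    simp only [id, Nat.cast_ofNat]
    ring
  have hcont : Continuous fun y : ℝ => y / 2 * (y * log y) - y ^ 2 / 4 :=
    (continuous_id.div_const 2).mul continuous_mul_log |>.sub ((continuous_pow 2).div_const 4)
  rw [intervalIntegral.integral_eq_sub_of_hasDerivAt_of_le zero_le_one hcont.continuousOn hderiv
    (continuous_mul_log.intervalIntegrable _ _)]
  norm_num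

lemma measurable_iSup_comap_of_mem {Ω ι β : Type*} [mβ : MeasurableSpace β] (X : ι → Ω → β)
    {s : Set ι} {i : ι} (hi : i ∈ s) : Measurable[⨆ j ∈ s, mβ.comap (X j)] (X i) :=
  Measurable.of_comap_le (le_iSup₂_of_le i hi le_rfl)

lemma ProbabilityTheory.iIndepFun.integral_mul_comp_eq_mul_integral {Ω ι β : Type*}
    [MeasurableSpace Ω] [mβ : MeasurableSpace β] {P : Measure Ω} {X : ι → Ω → β}
    (hind : iIndepFun X P) (hX : ∀ i, Measurable (X i)) (i : ι) {F : Ω → ℝ}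
    (hF : Measurable[⨆ j ∈ ({i}ᶜ : Set ι), mβ.comap (X j)] F) {ψ : β → ℝ} (hψ : Measurable ψ) :
    ∫ ω, F ω * ψ (X i ω) ∂P = (∫ ω, F ω ∂P) * ∫ ω, ψ (X i ω) ∂P := by
  have hle : ∀ j, mβ.comap (X j) ≤ ‹MeasurableSpace Ω› := fun j => (hX j).comap_le
  have hsep := indep_iSup_of_disjoint hle ((iIndepFun_iff_iIndep _ _ _).1 hind)
    (disjoint_compl_left (a := ({i} : Set ι)))
  rw [_root_.iSup_singleton] at hsep
  have hFψ : IndepFun F (fun ω => ψ (X i ω)) P := by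
    rw [IndepFun_iff_Indep]
    exact indep_of_indep_of_le_right (indep_of_indep_of_le_left hsep hF.comap_le)
      (hψ.comp (comap_measurable (X i))).comap_le
  exact hFψ.integral_mul_eq_mul_integral
    (hF.mono (iSup₂_le fun j _ => hle j) le_rfl).aestronglyMeasurable
    (hψ.comp (hX i)).aestronglyMeasurable

lemma ae_summable_norm_of_summable_integral_norm {Ω ι E : Type*} [MeasurableSpace Ω]
    {P : Measure Ω} [Countable ι] [NormedAddCommGroup E] {f : ι → Ω → E}
    (hf : ∀ i, Integrable (f i) P) (hs : Summable fun i => ∫ ω, ‖f i ω‖ ∂P) :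
    ∀ᵐ ω ∂P, Summable fun i => ‖f i ω‖ := by
  refine summable_norm_of_tsum_eLpNorm_ne_top le_rfl (fun i => (hf i).aestronglyMeasurable) ?_
  simp_rw [eLpNorm_one_eq_lintegral_enorm, ← ofReal_integral_norm_eq_lintegral_enorm (hf _),
    ← ENNReal.ofReal_tsum_of_nonneg (fun i => integral_nonneg fun _ => norm_nonneg _) hs]
  exact ENNReal.ofReal_ne_top

lemma sq_integral_abs_le_integral_sq {Ω : Type*} [MeasurableSpace Ω] {P : Measure Ω}
    [IsProbabilityMeasure P] {f : Ω → ℝ} (hf : MemLp f 2 P) :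
    (∫ ω, |f ω| ∂P) ^ 2 ≤ ∫ ω, f ω ^ 2 ∂P := by
  have hvar := variance_nonneg |f| P
  rw [variance_eq_sub hf.abs] at hvar
  simpa [sq_abs] using hvar

namespace QuicksortTree

lemma Cq_eq (x : ℝ) :
    Cq x = 1 + 2 * (x * Real.log x) + 2 * ((1 - x) * Real.log (1 - x)) := by
  rw [Cq]; ring

lemma continuous_Cq : Continuous Cq := by
  have h := Real.continuous_mul_log
  have h' : Continuous fun x : ℝ => (1 - x) * Real.log (1 - x) := h.comp (continuous_sub_left 1)
  simp only [funext Cq_eq]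
  fun_prop

lemma integral_Cq : ∫ x in (0 : ℝ)..1, Cq x = 0 := by
  have hsymm : ∫ x in (0 : ℝ)..1, (1 - x) * Real.log (1 - x) = -1 / 4 := by
    rw [intervalIntegral.integral_comp_sub_left (fun x => x * Real.log x) (1 : ℝ)]
    simpa using integral_mul_log_zero_one
  have hint : IntervalIntegrable (fun x : ℝ => x * Real.log x) volume 0 1 :=
    Real.continuous_mul_log.intervalIntegrable _ _
  have hint' : IntervalIntegrable (fun x : ℝ => (1 - x) * Real.log (1 - x)) volume 0 1 :=
    (Real.continuous_mul_log.comp (continuous_sub_left 1)).intervalIntegrable _ _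
  simp only [Cq_eq]
  rw [intervalIntegral.integral_add (intervalIntegrable_const.add (hint.const_mul 2))
    (hint'.const_mul 2), intervalIntegral.integral_add intervalIntegrable_const (hint.const_mul 2),
    intervalIntegral.integral_const_mul, intervalIntegral.integral_const_mul,
    integral_mul_log_zero_one, hsymm]
  norm_num

lemma abs_Cq_le_one {x : ℝ} (hx : x ∈ Set.Icc (0 : ℝ) 1) : |Cq x| ≤ 1 := by
  obtain ⟨h₀, h₁⟩ := hx
  have := Real.mul_log_nonpos h₀ h₁
  have := Real.mul_log_nonpos (sub_nonneg.2 h₁) (sub_le_self 1 h₀)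
  have := Real.self_sub_one_le_mul_log h₀
  have := Real.self_sub_one_le_mul_log (sub_nonneg.2 h₁)
  rw [abs_le, Cq_eq]
  constructor <;> linarith

def edgeWeight (b : Bool) (x : ℝ) : ℝ := if b then 1 - x else x

lemma Lw_cons {Ω : Type*} (U : List Bool → Ω → ℝ) (v : List Bool) (b : Bool) (w : List Bool)
    (ω : Ω) : Lw U v (b :: w) ω = edgeWeight b (U v ω) * Lw U (v ++ [b]) w ω := rfl

lemma edgeWeight_mem_Icc (b : Bool) {x : ℝ} (hx : x ∈ Set.Icc (0 : ℝ) 1) :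
    edgeWeight b x ∈ Set.Icc (0 : ℝ) 1 := by
  cases b <;> simp only [edgeWeight, Bool.false_eq_true, ite_false, ite_true, Set.mem_Icc] <;>
    constructor <;> linarith [hx.1, hx.2]

lemma continuous_edgeWeight (b : Bool) : Continuous (edgeWeight b) := by
  cases b
  exacts [continuous_id, continuous_sub_left 1]

lemma integral_edgeWeight_sq (b : Bool) : ∫ x in (0 : ℝ)..1, edgeWeight b x ^ 2 = 1 / 3 := by
  cases b
  · norm_num [edgeWeight, integral_pow]
  · simp only [edgeWeight, if_true]
    rw [intervalIntegral.integral_comp_sub_left (fun x : ℝ => x ^ 2) (1 : ℝ)]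
    norm_num [integral_pow]

section Pathwise

variable {Ω : Type*} (U : List Bool → Ω → ℝ)

def pathCost (v w : List Bool) (ω : Ω) : ℝ := Lw U v w ω * Cq (U (v ++ w) ω)

def levelSum (v : List Bool) (k : ℕ) (ω : Ω) : ℝ :=
  ∑ w : Fin k → Bool, pathCost U v (List.ofFn w) ω

lemma QSsum_eq_sum_levelSum (v : List Bool) (m : ℕ) (ω : Ω) :
    QSsum U v m ω = ∑ k ∈ range m, levelSum U v k ω := rfl

lemma levelSum_zero (v : List Bool) (ω : Ω) : levelSum U v 0 ω = Cq (U v ω) := by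
  simp [levelSum, pathCost, Lw]

lemma pathCost_cons (v : List Bool) (b : Bool) (w : List Bool) (ω : Ω) :
    pathCost U v (b :: w) ω = edgeWeight b (U v ω) * pathCost U (v ++ [b]) w ω := by
  simp only [pathCost, Lw_cons, List.append_assoc, List.singleton_append, mul_assoc]

lemma levelSum_succ (v : List Bool) (k : ℕ) (ω : Ω) :
    levelSum U v (k + 1) ω =
      U v ω * levelSum U (v ++ [false]) k ω + (1 - U v ω) * levelSum U (v ++ [true]) k ω := by
  rw [levelSum, ← (Fin.consEquiv fun _ => Bool).sum_comp, Fintype.sum_prod_type,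
    Fintype.sum_bool]
  simp only [Fin.consEquiv, Equiv.coe_fn_mk, List.ofFn_cons, pathCost_cons, ← Finset.mul_sum]
  simp only [edgeWeight, ite_true, Bool.false_eq_true, ite_false, levelSum]
  ring

lemma tsum_levelSum_eq {v : List Bool} {ω : Ω}
    (hfalse : Summable fun k => levelSum U (v ++ [false]) k ω)
    (htrue : Summable fun k => levelSum U (v ++ [true]) k ω) :
    ∑' k, levelSum U v k ω = U v ω * ∑' k, levelSum U (v ++ [false]) k ω
      + (1 - U v ω) * ∑' k, levelSum U (v ++ [true]) k ω + Cq (U v ω) := by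
  have hsucc : Summable fun k => levelSum U v (k + 1) ω := by
    simpa only [levelSum_succ] using (hfalse.mul_left (U v ω)).add (htrue.mul_left (1 - U v ω))
  rw [tsum_eq_zero_add' (f := fun k => levelSum U v k ω) hsucc]
  simp only [levelSum_succ, levelSum_zero]
  rw [(hfalse.mul_left _).tsum_add (htrue.mul_left _), tsum_mul_left, tsum_mul_left]
  ring

variable {U}

lemma Lw_mem_Icc {ω : Ω} (hU : ∀ v, U v ω ∈ Set.Icc (0 : ℝ) 1) (w : List Bool) :
    ∀ v, Lw U v w ω ∈ Set.Icc (0 : ℝ) 1 := by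
  induction w with
  | nil => intro v; simp [Lw]
  | cons b u ih =>
    intro v
    obtain ⟨he₀, he₁⟩ := edgeWeight_mem_Icc b (hU v)
    obtain ⟨hl₀, hl₁⟩ := ih (v ++ [b])
    rw [Lw_cons]
    exact ⟨mul_nonneg he₀ hl₀, mul_le_one₀ he₁ hl₀ hl₁⟩

lemma abs_pathCost_le_one {ω : Ω} (hU : ∀ v, U v ω ∈ Set.Icc (0 : ℝ) 1) (v w : List Bool) :
    |pathCost U v w ω| ≤ 1 := by
  obtain ⟨h₀, h₁⟩ := Lw_mem_Icc hU w v
  rw [pathCost, abs_mul, abs_of_nonneg h₀]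
  exact mul_le_one₀ h₁ (abs_nonneg _) (abs_Cq_le_one (hU _))

lemma measurable_Lw {m : MeasurableSpace Ω} (w : List Bool) :
    ∀ v, (∀ p : List Bool, p.length < w.length → Measurable[m] (U (v ++ p))) →
      Measurable[m] (Lw U v w) := by
  induction w with
  | nil => intro v _; exact measurable_const
  | cons b u ih =>
    intro v hU
    have hv : Measurable (U v) := by simpa using hU [] (by simp)
    have hrest := ih (v ++ [b]) fun p hp => by
      simpa using hU (b :: p) (by simpa using hp)
    exact ((continuous_edgeWeight b).measurable.comp hv).mul hrest

end Pathwise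

section UniformTree

variable {Ω : Type*} [MeasurableSpace Ω] {P : Measure Ω} {U : List Bool → Ω → ℝ}
  (hmeas : ∀ v, Measurable (U v))
  (hunif : ∀ v, Measure.map (U v) P = volume.restrict (Set.Icc (0 : ℝ) 1))
  (hindep : iIndepFun U P)

include hmeas hunif in
lemma ae_forall_mem_Icc : ∀ᵐ ω ∂P, ∀ v, U v ω ∈ Set.Icc (0 : ℝ) 1 :=
  ae_all_iff.2 fun v => ae_of_ae_map (hmeas v).aemeasurable <| by
    rw [hunif v]; exact ae_restrict_mem measurableSet_Icc

include hmeas hunif in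
lemma integral_comp_eq_intervalIntegral (v : List Bool) {ψ : ℝ → ℝ} (hψ : Measurable ψ) :
    ∫ ω, ψ (U v ω) ∂P = ∫ x in (0 : ℝ)..1, ψ x := by
  rw [← integral_map (hmeas v).aemeasurable hψ.aestronglyMeasurable, hunif v,
    integral_Icc_eq_integral_Ioc, intervalIntegral.integral_of_le zero_le_one]

include hmeas hunif hindep in
lemma integral_pathCost_mul_eq_zero (v : List Bool) {w w' : List Bool}
    (hlen : w.length = w'.length) (hne : w ≠ w') :
    ∫ ω, pathCost U v w ω * pathCost U v w' ω ∂P = 0 := by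
  have hU : ∀ p : List Bool, p ≠ w → Measurable[⨆ q ∈ ({v ++ w}ᶜ : Set (List Bool)),
      MeasurableSpace.comap (U q) inferInstance] (U (v ++ p)) := fun p hp =>
    measurable_iSup_comap_of_mem U fun h => hp (List.append_cancel_left h)
  have hlw : ∀ p : List Bool, p.length < w.length → p ≠ w := fun p hp h => hp.ne (h ▸ rfl)
  have hsub : Measurable[⨆ q ∈ ({v ++ w}ᶜ : Set (List Bool)),
      MeasurableSpace.comap (U q) inferInstance] (fun ω => Lw U v w ω * pathCost U v w' ω) :=
    (measurable_Lw w v fun p hp => hU p (hlw p hp)).mul <|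
      (measurable_Lw w' v fun p hp => hU p (hlw p (hlen ▸ hp))).mul
        (continuous_Cq.measurable.comp (hU w' hne.symm))
  calc ∫ ω, pathCost U v w ω * pathCost U v w' ω ∂P
      = ∫ ω, (Lw U v w ω * pathCost U v w' ω) * Cq (U (v ++ w) ω) ∂P := by
        simp only [pathCost]
        congr 1 with ω
        ring
    _ = (∫ ω, Lw U v w ω * pathCost U v w' ω ∂P) * ∫ ω, Cq (U (v ++ w) ω) ∂P :=
        hindep.integral_mul_comp_eq_mul_integral hmeas (v ++ w) hsub continuous_Cq.measurable
    _ = 0 := by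
        rw [integral_comp_eq_intervalIntegral hmeas hunif _ continuous_Cq.measurable, integral_Cq,
          mul_zero]

variable [IsProbabilityMeasure P]

include hmeas hunif hindep in
lemma integral_Lw_sq (w : List Bool) :
    ∀ v, ∫ ω, Lw U v w ω ^ 2 ∂P = (1 / 3 : ℝ) ^ w.length := by
  induction w with
  | nil => intro v; simp [Lw]
  | cons b u ih =>
    intro v
    have hsub : Measurable[⨆ p ∈ ({v}ᶜ : Set (List Bool)),
        MeasurableSpace.comap (U p) inferInstance] (fun ω => Lw U (v ++ [b]) u ω ^ 2) :=
      (measurable_Lw u (v ++ [b]) fun p _ => measurable_iSup_comap_of_mem U fun h => by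
        simpa using congrArg List.length h).pow_const 2
    calc ∫ ω, Lw U v (b :: u) ω ^ 2 ∂P
        = ∫ ω, Lw U (v ++ [b]) u ω ^ 2 * edgeWeight b (U v ω) ^ 2 ∂P := by
          simp only [Lw_cons, mul_pow, mul_comm]
      _ = (∫ ω, Lw U (v ++ [b]) u ω ^ 2 ∂P) * ∫ ω, edgeWeight b (U v ω) ^ 2 ∂P :=
          hindep.integral_mul_comp_eq_mul_integral hmeas v hsub
            ((continuous_edgeWeight b).pow 2).measurable
      _ = (1 / 3 : ℝ) ^ (b :: u).length := by
          rw [ih, integral_comp_eq_intervalIntegral hmeas hunif v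
            (ψ := fun x => edgeWeight b x ^ 2) ((continuous_edgeWeight b).pow 2).measurable,
            integral_edgeWeight_sq,
            List.length_cons, pow_succ]

include hmeas hunif in
lemma memLp_pathCost (p : ℝ≥0∞) (v w : List Bool) : MemLp (pathCost U v w) p P := by
  refine MemLp.of_bound ?_ 1 ?_
  · exact ((measurable_Lw w v fun _ _ => hmeas _).mul
      (continuous_Cq.measurable.comp (hmeas _))).aestronglyMeasurable
  · filter_upwards [ae_forall_mem_Icc hmeas hunif] with ω hω
    exact abs_pathCost_le_one hω v w

include hmeas hunif hindep in
lemma integral_pathCost_sq_le (v w : List Bool) :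
    ∫ ω, pathCost U v w ω ^ 2 ∂P ≤ (1 / 3 : ℝ) ^ w.length := by
  have hLw : ∫ ω, Lw U v w ω ^ 2 ∂P = (1 / 3 : ℝ) ^ w.length :=
    integral_Lw_sq hmeas hunif hindep w v
  rw [← hLw]
  refine integral_mono_ae (memLp_pathCost hmeas hunif 2 v w).integrable_sq
    (Integrable.of_integral_ne_zero (by rw [hLw]; positivity)) ?_
  filter_upwards [ae_forall_mem_Icc hmeas hunif] with ω hω
  have hC : Cq (U (v ++ w) ω) ^ 2 ≤ 1 := by
    simpa [sq_abs] using pow_le_pow_left₀ (abs_nonneg _) (abs_Cq_le_one (hω (v ++ w))) 2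
  calc pathCost U v w ω ^ 2 = Lw U v w ω ^ 2 * Cq (U (v ++ w) ω) ^ 2 := by
        rw [pathCost, mul_pow]
    _ ≤ Lw U v w ω ^ 2 := mul_le_of_le_one_right (sq_nonneg _) hC

include hmeas hunif hindep in
lemma integral_levelSum_sq_le (v : List Bool) (k : ℕ) :
    ∫ ω, levelSum U v k ω ^ 2 ∂P ≤ (2 / 3 : ℝ) ^ k := by
  have hint : ∀ w w' : Fin k → Bool, Integrable
      (fun ω => pathCost U v (List.ofFn w) ω * pathCost U v (List.ofFn w') ω) P := fun w w' =>
    (memLp_pathCost hmeas hunif 2 v _).integrable_mul (memLp_pathCost hmeas hunif 2 v _)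
  calc ∫ ω, levelSum U v k ω ^ 2 ∂P
      = ∑ w : Fin k → Bool, ∑ w' : Fin k → Bool,
          ∫ ω, pathCost U v (List.ofFn w) ω * pathCost U v (List.ofFn w') ω ∂P := by
        simp only [levelSum, sq, Finset.sum_mul_sum]
        rw [integral_finsetSum _ fun w _ => integrable_finsetSum _ fun w' _ => hint w w']
        exact Finset.sum_congr rfl fun w _ => integral_finsetSum _ fun w' _ => hint w w'
    _ = ∑ w : Fin k → Bool, ∫ ω, pathCost U v (List.ofFn w) ω ^ 2 ∂P := by
        refine Finset.sum_congr rfl fun w _ => ?_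
        rw [Finset.sum_eq_single w (fun w' _ hne => integral_pathCost_mul_eq_zero hmeas hunif
          hindep v (by simp) fun h => hne (List.ofFn_injective h).symm) (by simp)]
        simp only [sq]
    _ ≤ ∑ _w : Fin k → Bool, (1 / 3 : ℝ) ^ k :=
        Finset.sum_le_sum fun w _ => by
          simpa using integral_pathCost_sq_le hmeas hunif hindep v (List.ofFn w)
    _ = (2 / 3 : ℝ) ^ k := by
        rw [Finset.sum_const, Finset.card_univ, Fintype.card_fun, Fintype.card_bool,
          Fintype.card_fin, nsmul_eq_mul]
        push_cast
        rw [← mul_pow]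
        norm_num

include hmeas hunif hindep in
lemma integral_abs_levelSum_le (v : List Bool) (k : ℕ) :
    ∫ ω, |levelSum U v k ω| ∂P ≤ √(2 / 3) ^ k := by
  have hL2 : MemLp (levelSum U v k) 2 P :=
    memLp_finsetSum _ fun w _ => memLp_pathCost hmeas hunif 2 v _
  have hsq : (√(2 / 3) ^ k) ^ 2 = (2 / 3 : ℝ) ^ k := by
    rw [← pow_mul, mul_comm, pow_mul, Real.sq_sqrt (by norm_num)]
  refine le_of_sq_le_sq ?_ (by positivity)
  rw [hsq]
  exact (sq_integral_abs_le_integral_sq hL2).trans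
    (integral_levelSum_sq_le hmeas hunif hindep v k)

include hmeas hunif hindep in
lemma ae_summable_levelSum (v : List Bool) :
    ∀ᵐ ω ∂P, Summable fun k => levelSum U v k ω := by
  have hint : ∀ k, Integrable (levelSum U v k) P := fun k =>
    (memLp_finsetSum _ fun w _ => memLp_pathCost hmeas hunif 1 v _).integrable le_rfl
  have hgeom : Summable fun k : ℕ => √(2 / 3 : ℝ) ^ k :=
    summable_geometric_of_lt_one (Real.sqrt_nonneg _) ((Real.sqrt_lt' one_pos).2 (by norm_num))
  have hs : Summable fun k => ∫ ω, ‖levelSum U v k ω‖ ∂P :=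
    hgeom.of_nonneg_of_le (fun k => integral_nonneg fun _ => norm_nonneg _)
      fun k => by
        simpa only [Real.norm_eq_abs] using integral_abs_levelSum_le hmeas hunif hindep v k
  filter_upwards [ae_summable_norm_of_summable_integral_norm hint hs] with ω hω
  exact hω.of_norm

end UniformTree

end QuicksortTree

/-- For every vertex `v ∈ V` the random variable
`Q^v = lim_m Σ_{|w|<m} L^v_w·C(U^{vw})` exists almost surely, and the family
`(Q^v)_v` satisfies, almost surely for every `v`, the pathwise recursive Quicksort
fixed point equation `Q^v = U^v·Q^{v1} + (1−U^v)·Q^{v2} + C(U^v)`. -/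
theorem quicksort_tree_fixed_point {Ω : Type*} [MeasurableSpace Ω] (P : Measure Ω)
    [IsProbabilityMeasure P] (U : List Bool → Ω → ℝ)
    (hmeas : ∀ v, Measurable (U v))
    (hunif : ∀ v, Measure.map (U v) P = volume.restrict (Set.Icc (0 : ℝ) 1))
    (hindep : iIndepFun U P) :
    ∃ Q : List Bool → Ω → ℝ,
      (∀ v, ∀ᵐ ω ∂P, Filter.Tendsto (fun m => QSsum U v m ω) Filter.atTop (nhds (Q v ω)))
      ∧ (∀ᵐ ω ∂P, ∀ v : List Bool,
          Q v ω = U v ω * Q (v ++ [false]) ω + (1 - U v ω) * Q (v ++ [true]) ω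
            + Cq (U v ω)) := by
  have hsum : ∀ᵐ ω ∂P, ∀ v, Summable fun k => QuicksortTree.levelSum U v k ω :=
    ae_all_iff.2 fun v => QuicksortTree.ae_summable_levelSum hmeas hunif hindep v
  refine ⟨fun v ω => ∑' k, QuicksortTree.levelSum U v k ω, fun v => ?_, ?_⟩
  · filter_upwards [hsum] with ω hω
    simpa only [QuicksortTree.QSsum_eq_sum_levelSum] using (hω v).hasSum.tendsto_sum_nat
  · filter_upwards [hsum] with ω hω v
    exact QuicksortTree.tsum_levelSum_eq U (hω _) (hω _)

end
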